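/- Let ω > 0, V > 0 and φ ∈ ℝ, and for each t let M(t) ∈ ℝ^{2×2} be the matrix whose first column is V·S_{φ,ab}(t) := V·√(2/3)·(sin(ωt+φ), sin(ωt+φ−2π/3)) and whose second column is −S_{0,ab}(t) := −√(2/3)·(sin(ωt), sin(ωt−2π/3)). Then for all t, det M(t) = (√3/3)·V·sin(φ); in particular det M(t) is constant in t and is nonzero if and only if φ is not an integer multiple of π. -/
import Mathlib


open Real Matrix

/-- The phase-`a` and phase-`b` components of the balanced three-phase vector `S_φ(t)`. -/
noncomputable def twoPhase (ω φ t : ℝ) : Fin 2 → ℝ :=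
  ![Real.sqrt (2 / 3) * Real.sin (ω * t + φ),
    Real.sqrt (2 / 3) * Real.sin (ω * t + φ - 2 * π / 3)]

/-- The steady-state reduced regressor matrix, with columns `V·S_{φ,ab}(t)` and
`−S_{0,ab}(t)`. -/
noncomputable def steadyRegressor (ω V φ t : ℝ) : Matrix (Fin 2) (Fin 2) ℝ :=
  Matrix.of fun r : Fin 2 => ![V * twoPhase ω φ t r, -(twoPhase ω 0 t r)]

theorem steady_regressor_det (ω V φ : ℝ) (hω : 0 < ω) (hV : 0 < V) :
    (∀ t : ℝ, (steadyRegressor ω V φ t).det = Real.sqrt 3 / 3 * V * Real.sin φ) ∧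
    (∀ t : ℝ, (steadyRegressor ω V φ t).det ≠ 0 ↔ ¬ ∃ k : ℤ, φ = k * π) := by
  have key : ∀ t : ℝ, (steadyRegressor ω V φ t).det = Real.sqrt 3 / 3 * V * Real.sin φ := by
    intro t
    have ha : Real.sqrt (2/3) * Real.sqrt (2/3) = 2/3 :=
      Real.mul_self_sqrt (by norm_num)
    have hs : Real.sin (2*π/3) = Real.sqrt 3 / 2 := by
      rw [show (2*π/3 : ℝ) = π - π/3 by ring, Real.sin_pi_sub, Real.sin_pi_div_three]
    have hc : Real.cos (2*π/3) = -(1/2) := by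
      rw [show (2*π/3 : ℝ) = π - π/3 by ring, Real.cos_pi_sub, Real.cos_pi_div_three]
    have hpyth : Real.sin (ω*t) ^ 2 + Real.cos (ω*t) ^ 2 = 1 := Real.sin_sq_add_cos_sq _
    simp only [steadyRegressor, twoPhase, Matrix.det_fin_two, Matrix.of_apply,
      Matrix.cons_val_zero, Matrix.cons_val_one, Matrix.head_cons, add_zero]
    rw [show ω*t + φ - 2*π/3 = (ω*t + φ) - 2*π/3 by ring,
      show ω*t - 2*π/3 = (ω*t) - 2*π/3 by ring,
      Real.sin_sub, Real.sin_sub, Real.sin_add, Real.cos_add, hs, hc]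
    linear_combination (Real.sqrt 3 / 2 * V * Real.sin φ *
        (Real.sin (ω*t) ^ 2 + Real.cos (ω*t) ^ 2)) * ha +
      (Real.sqrt 3 / 3 * V * Real.sin φ) * hpyth
  refine ⟨key, fun t => ?_⟩
  rw [key t]
  have h3 : Real.sqrt 3 / 3 * V ≠ 0 := by positivity
  rw [mul_ne_zero_iff, and_iff_right h3]
  rw [ne_eq, Real.sin_eq_zero_iff]
  exact not_congr ⟨fun ⟨n, hn⟩ => ⟨n, hn.symm⟩, fun ⟨n, hn⟩ => ⟨n, hn.symm⟩⟩
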